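/- arXiv:2502.00135 — 2 statements merged into one kernel-verified Lean document; each statement's English description precedes it below -/
import Mathlib

section
/- Let T be a tree with k ≥ 1 edges. Every properly edge-colored graph whose minimum degree is at least 2k contains a rainbow copy of T. Consequently, δ*(G, T) < 2k for every graph G. -/
open SimpleGraph

/-- An edge coloring is proper on `H` if distinct edges of `H` sharing a vertex
receive different colors. -/
def IsProperEdgeColoring {V : Type*} (H : SimpleGraph V) (c : Sym2 V → ℕ) : Prop :=
  ∀ ⦃e₁ : Sym2 V⦄, e₁ ∈ H.edgeSet → ∀ ⦃e₂ : Sym2 V⦄, e₂ ∈ H.edgeSet →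
    e₁ ≠ e₂ → (∃ v, v ∈ e₁ ∧ v ∈ e₂) → c e₁ ≠ c e₂

/-- The graph `H`, edge colored by `c`, contains a rainbow copy of `F`:
there is an (injective) copy of `F` in `H` all of whose edges receive
pairwise distinct colors. -/
def HasRainbowCopy {V W : Type*} (H : SimpleGraph V) (c : Sym2 V → ℕ)
    (F : SimpleGraph W) : Prop :=
  ∃ f : W ↪ V, (∀ ⦃a b : W⦄, F.Adj a b → H.Adj (f a) (f b)) ∧
    ∀ ⦃a b a' b' : W⦄, F.Adj a b → F.Adj a' b' → s(a, b) ≠ s(a', b') →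
      c s(f a, f b) ≠ c s(f a', f b')

/-- `H` admits a proper edge coloring with no rainbow copy of `F`. -/
def RainbowFree {V W : Type*} (H : SimpleGraph V) (F : SimpleGraph W) : Prop :=
  ∃ c : Sym2 V → ℕ, IsProperEdgeColoring H c ∧ ¬ HasRainbowCopy H c F

/-- The rainbow extremal number `ex*(G,F)`: the maximum number of edges of a
subgraph `H` of `G` admitting a proper edge coloring with no rainbow copy of `F`. -/
noncomputable def rainbowExtremalNumber {V W : Type*} [Fintype V]
    (G : SimpleGraph V) (F : SimpleGraph W) : ℕ :=
  sSup {m | ∃ H : SimpleGraph V, H ≤ G ∧ RainbowFree H F ∧ m = H.edgeSet.ncard}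

/-- The minimum degree of a subgraph, taken over its own vertex set. -/
noncomputable def subMinDegree {V : Type*} {G : SimpleGraph V} (H : G.Subgraph) : ℕ :=
  sInf {d | ∃ v ∈ H.verts, d = (H.neighborSet v).ncard}

/-- `δ*(G,F)`: the maximum of the minimum degree over all subgraphs `H` of `G`
admitting a proper edge coloring with no rainbow copy of `F`. -/
noncomputable def rainbowMinDegree {V W : Type*} [Fintype V]
    (G : SimpleGraph V) (F : SimpleGraph W) : ℕ :=
  sSup {m | ∃ H : G.Subgraph, RainbowFree H.spanningCoe F ∧ m = subMinDegree H}

/-- The `n`-dimensional hypercube graph `Q_n`. -/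
def cubeGraph (n : ℕ) : SimpleGraph (Fin n → Bool) where
  Adj x y := {i | x i ≠ y i}.ncard = 1
  symm := by
    constructor
    intro x y h
    have hs : {i | y i ≠ x i} = {i | x i ≠ y i} := by ext i; simp [ne_comm]
    rw [hs]; exact h
  loopless := by
    constructor
    intro x h
    simp at h

/-- The star `K_{1,k}` with `k` edges. -/
def starGraph (k : ℕ) : SimpleGraph (Fin (k + 1)) where
  Adj i j := i ≠ j ∧ (i = 0 ∨ j = 0)
  symm := by constructor; intro i j h; exact ⟨h.1.symm, h.2.symm⟩
  loopless := by constructor; intro i h; exact h.1 rfl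

/-- `G` contains a copy of `F` as a subgraph. -/
def ContainsCopy {V W : Type*} (G : SimpleGraph V) (F : SimpleGraph W) : Prop :=
  ∃ f : W ↪ V, ∀ ⦃a b : W⦄, F.Adj a b → G.Adj (f a) (f b)

/-!
Embed the tree greedily, one leaf at a time. Deleting a leaf `v`, with neighbour `u`, from a
tree on `n` vertices leaves a tree on `n - 1` vertices, which has a rainbow copy by induction.
The image `y` of `u` has at least `2 (n - 1)` neighbours. At most `n - 1` of them are already
images, and since the coloring is proper, each of the `n - 2` colors already used rules out at
most one more; so some neighbour of `y` is left to receive `v`. For the bound on `δ*`, a subgraph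
of minimum degree at least `2k` contains a rainbow copy of `T` under every proper coloring.
-/

theorem IsProperEdgeColoring.comap {U V : Type*} {A : SimpleGraph U} {B : SimpleGraph V}
    {c : Sym2 V → ℕ} (hc : IsProperEdgeColoring B c) (g : Copy A B) :
    IsProperEdgeColoring A (c ∘ Sym2.map g) := by
  intro e₁ he₁ e₂ he₂ hne ⟨x, hx₁, hx₂⟩
  exact hc (g.mapEdgeSet ⟨e₁, he₁⟩).2 (g.mapEdgeSet ⟨e₂, he₂⟩).2
    (fun h => hne (Sym2.map.injective g.injective h))
    ⟨g x, Sym2.mem_map.2 ⟨x, hx₁, rfl⟩, Sym2.mem_map.2 ⟨x, hx₂, rfl⟩⟩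

theorem IsProperEdgeColoring.injOn_neighborSet {U : Type*} {H : SimpleGraph U}
    {c : Sym2 U → ℕ} (hc : IsProperEdgeColoring H c) (y : U) :
    Set.InjOn (fun x => c s(y, x)) (H.neighborSet y) := by
  intro x₁ hx₁ x₂ hx₂ h
  by_contra hne
  exact hc hx₁ hx₂ (fun h' => hne (Sym2.congr_right.1 h'))
    ⟨y, Sym2.mem_mk_left _ _, Sym2.mem_mk_left _ _⟩ h

theorem IsProperEdgeColoring.exists_adj_notMem_of_ncard_lt {U : Type*} {H : SimpleGraph U}
    {c : Sym2 U → ℕ} (hc : IsProperEdgeColoring H c) {y : U} {S : Set U} {C : Set ℕ}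
    (hS : S.Finite) (hC : C.Finite) (h : S.ncard + C.ncard < (H.neighborSet y).ncard) :
    ∃ x, H.Adj y x ∧ x ∉ S ∧ c s(y, x) ∉ C := by
  by_contra! hN
  have hbad : (H.neighborSet y \ S).ncard ≤ C.ncard :=
    Set.ncard_le_ncard_of_injOn _ (fun x hx => hN x hx.1 hx.2)
      ((hc.injOn_neighborSet y).mono Set.sdiff_subset) hC
  have := Set.ncard_le_ncard_sdiff_add_ncard (H.neighborSet y) S hS
  omega

namespace SimpleGraph

variable {U V W : Type*}

def Copy.IsRainbow {F : SimpleGraph W} {H : SimpleGraph U} (f : Copy F H) (c : Sym2 U → ℕ) :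
    Prop :=
  Set.InjOn (fun e => c (e.map f)) F.edgeSet

theorem Copy.IsRainbow.hasRainbowCopy {F : SimpleGraph W} {H : SimpleGraph U}
    {c : Sym2 U → ℕ} {f : Copy F H} (hf : f.IsRainbow c) : HasRainbowCopy H c F :=
  ⟨f.toEmbedding, fun _ _ hab => f.toHom.map_adj hab,
    fun _ _ _ _ hab hab' hne heq => hne (hf hab hab' heq)⟩

theorem Copy.IsRainbow.comp {F : SimpleGraph W} {A : SimpleGraph U} {B : SimpleGraph V}
    {c : Sym2 V → ℕ} {f : Copy F A} (g : Copy A B) (hf : f.IsRainbow (c ∘ Sym2.map g)) :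
    (g.comp f).IsRainbow c := by
  simpa only [Copy.IsRainbow, Copy.coe_comp, Function.comp_apply, Sym2.map_map] using hf

theorem edgeSet_eq_insert_image_induce_compl_singleton {F : SimpleGraph W} {v u : W}
    (hvu : F.Adj v u) (hleaf : ∀ w, F.Adj v w → w = u) :
    F.edgeSet = insert s(v, u) (Sym2.map Subtype.val '' (F.induce {v}ᶜ).edgeSet) := by
  ext e
  induction e with
  | h a b =>
    simp only [mem_edgeSet, Set.mem_insert_iff, Set.mem_image, Sym2.exists, Sym2.map_mk,
      comap_adj, Function.Embedding.subtype_apply, Subtype.exists, Set.mem_compl_iff,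
      Set.mem_singleton_iff]
    constructor
    · intro hab
      by_cases ha : a = v
      · subst ha; exact Or.inl (by rw [hleaf b hab])
      by_cases hb : b = v
      · subst hb; exact Or.inl (by rw [hleaf a hab.symm, Sym2.eq_swap])
      exact Or.inr ⟨a, ha, b, hb, hab, rfl⟩
    · rintro (h | ⟨a', -, b', -, hab, h⟩) <;> rw [Sym2.eq_iff] at h <;>
        rcases h with ⟨rfl, rfl⟩ | ⟨rfl, rfl⟩
      exacts [hvu, hvu.symm, hab, hab.symm]

theorem Copy.IsRainbow.exists_extend_of_leaf {F : SimpleGraph W} {H : SimpleGraph U}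
    {c : Sym2 U → ℕ} {v u : W} (hvu : F.Adj v u) (hleaf : ∀ w, F.Adj v w → w = u)
    {g : Copy (F.induce {v}ᶜ) H} (hg : g.IsRainbow c) {x : U}
    (hx : H.Adj (g ⟨u, hvu.ne'⟩) x) (hxg : x ∉ Set.range g)
    (hxc : c s(g ⟨u, hvu.ne'⟩, x) ∉ (fun e => c (e.map g)) '' (F.induce {v}ᶜ).edgeSet) :
    ∃ f : Copy F H, f.IsRainbow c := by
  classical
  let f : W → U := fun w => if h : w = v then x else g ⟨w, h⟩
  have hfv : f v = x := dif_pos rfl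
  have hfg : ∀ w : ({v}ᶜ : Set W), f w = g w := fun w => dif_neg w.2
  have hfu : f u = g ⟨u, hvu.ne'⟩ := hfg ⟨u, hvu.ne'⟩
  have hmap : ∀ e : Sym2 ({v}ᶜ : Set W), (e.map Subtype.val).map f = e.map g := fun e => by
    rw [Sym2.map_map]; congr 1; funext w; exact hfg w
  have hadj : ∀ a b, F.Adj a b → H.Adj (f a) (f b) := by
    intro a b hab
    by_cases ha : a = v
    · subst ha; rw [hleaf b hab, hfv, hfu]; exact hx.symm
    by_cases hb : b = v
    · subst hb; rw [hleaf a hab.symm, hfv, hfu]; exact hx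
    rw [hfg ⟨a, ha⟩, hfg ⟨b, hb⟩]
    exact g.toHom.map_adj (show (F.induce {v}ᶜ).Adj ⟨a, ha⟩ ⟨b, hb⟩ from hab)
  have hinj : Function.Injective f := by
    intro a b hab
    by_cases ha : a = v <;> by_cases hb : b = v
    · rw [ha, hb]
    · rw [ha, hfv, hfg ⟨b, hb⟩] at hab; exact absurd ⟨_, hab.symm⟩ hxg
    · rw [hb, hfv, hfg ⟨a, ha⟩] at hab; exact absurd ⟨_, hab⟩ hxg
    · rw [hfg ⟨a, ha⟩, hfg ⟨b, hb⟩] at hab; exact congrArg Subtype.val (g.injective hab)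
  refine ⟨⟨⟨f, hadj _ _⟩, hinj⟩, ?_⟩
  have hvu_notMem : s(v, u) ∉ Sym2.map Subtype.val '' (F.induce {v}ᶜ).edgeSet := by
    rintro ⟨e, -, he⟩
    obtain ⟨w, -, hw⟩ := Sym2.mem_map.1 (he ▸ Sym2.mem_mk_left v u)
    exact w.2 hw
  show Set.InjOn (fun e => c (e.map f)) F.edgeSet
  rw [edgeSet_eq_insert_image_induce_compl_singleton hvu hleaf, Set.injOn_insert hvu_notMem,
    Set.image_image]
  refine ⟨Set.InjOn.image_of_comp ?_, ?_⟩
  · simp only [Function.comp_def, hmap]; exact hg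
  · simpa only [hmap, Sym2.map_mk, hfv, hfu, Sym2.eq_swap] using hxc

theorem IsTree.ncard_edgeSet_add_one [Fintype W] {T : SimpleGraph W} (hT : T.IsTree) :
    T.edgeSet.ncard + 1 = Fintype.card W := by
  classical
  rw [← hT.card_edgeFinset, ← coe_edgeFinset, Set.ncard_coe_finset]

theorem IsTree.exists_isRainbow_copy [Nonempty U] [Fintype W] {T : SimpleGraph W}
    (hT : T.IsTree) {H : SimpleGraph U} {c : Sym2 U → ℕ} (hc : IsProperEdgeColoring H c)
    (hdeg : ∀ y, 2 * (Fintype.card W - 1) ≤ (H.neighborSet y).ncard) :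
    ∃ f : Copy T H, f.IsRainbow c := by
  induction hn : Fintype.card W using Nat.strong_induction_on generalizing W with
  | _ n ih =>
    rcases subsingleton_or_nontrivial W with hW | hW
    · let f : T →g H :=
        ⟨fun _ => Classical.arbitrary U, fun hab => (hab.ne (Subsingleton.elim _ _)).elim⟩
      exact ⟨⟨f, fun _ _ _ => Subsingleton.elim _ _⟩,
        Set.subsingleton_of_subsingleton.injOn _⟩
    classical
    obtain ⟨v, hv⟩ := hT.exists_vert_degree_one_of_nontrivial
    obtain ⟨u, hvu, hleaf⟩ := degree_eq_one_iff_existsUnique_adj.1 hv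
    have hT' : (T.induce {v}ᶜ).IsTree :=
      ⟨hT.connected.induce_compl_singleton_of_degree_eq_one hv, hT.isAcyclic.induce _⟩
    have hcard : Fintype.card ({v}ᶜ : Set W) = n - 1 := by
      rw [Fintype.card_compl_set, hn, Set.card_singleton]
    have hn2 : 2 ≤ n := hn ▸ Fintype.one_lt_card
    obtain ⟨g, hg⟩ := ih (n - 1) (by omega) hT'
      (fun y => by rw [hcard]; have := hdeg y; omega) hcard
    have hrange : (Set.range g).ncard = n - 1 := by
      rw [Set.ncard_range_of_injective (f := ⇑g) g.injective, Nat.card_eq_fintype_card, hcard]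
    have hcolors : ((fun e => c (e.map g)) '' (T.induce {v}ᶜ).edgeSet).ncard ≤ n - 2 := by
      have := hT'.ncard_edgeSet_add_one
      have := Set.ncard_image_le (f := fun e => c (e.map g)) (T.induce {v}ᶜ).edgeSet.toFinite
      omega
    obtain ⟨x, hx, hxg, hxc⟩ := hc.exists_adj_notMem_of_ncard_lt (y := g ⟨u, hvu.ne'⟩)
      (C := (fun e => c (e.map g)) '' (T.induce {v}ᶜ).edgeSet)
      (Set.finite_range g) (Set.toFinite _) (by have := hdeg (g ⟨u, hvu.ne'⟩); omega)
    exact hg.exists_extend_of_leaf hvu hleaf hx hxg hxc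

def Subgraph.coeCopySpanningCoe {G : SimpleGraph V} (H : G.Subgraph) : Copy H.coe H.spanningCoe :=
  ⟨⟨Subtype.val, id⟩, Subtype.val_injective⟩

theorem Subgraph.le_ncard_neighborSet_of_le_subMinDegree {G : SimpleGraph V} {H : G.Subgraph}
    {d : ℕ} (hd : d ≤ subMinDegree H) {v : V} (hv : v ∈ H.verts) :
    d ≤ (H.neighborSet v).ncard :=
  hd.trans (Nat.sInf_le ⟨v, hv, rfl⟩)

theorem Subgraph.verts_nonempty_of_subMinDegree_pos {G : SimpleGraph V} {H : G.Subgraph}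
    (h : 0 < subMinDegree H) : H.verts.Nonempty := by
  by_contra hempty
  rw [Set.not_nonempty_iff_eq_empty] at hempty
  simp [subMinDegree, hempty] at h

theorem IsTree.rainbowMinDegree_lt [Fintype V] [Fintype W] (G : SimpleGraph V)
    {T : SimpleGraph W} (hT : T.IsTree) (hW : 1 < Fintype.card W) :
    rainbowMinDegree G T < 2 * (Fintype.card W - 1) := by
  suffices h : ∀ m ∈ {m | ∃ H : G.Subgraph, RainbowFree H.spanningCoe T ∧
      m = subMinDegree H}, m ≤ 2 * (Fintype.card W - 1) - 1 from
    (csSup_le' h).trans_lt (by omega)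
  rintro _ ⟨H, ⟨c, hc, hfree⟩, rfl⟩
  by_contra! hdeg
  have : Nonempty H.verts :=
    (Subgraph.verts_nonempty_of_subMinDegree_pos (by omega)).to_subtype
  obtain ⟨f, hf⟩ := hT.exists_isRainbow_copy (hc.comap H.coeCopySpanningCoe) fun y => by
    rw [Set.ncard_congr' (Subgraph.coeNeighborSetEquiv y)]
    exact Subgraph.le_ncard_neighborSet_of_le_subMinDegree (H := H) (by omega) y.2
  exact hfree (hf.comp H.coeCopySpanningCoe).hasRainbowCopy

end SimpleGraph

theorem stmt2_general {U V W : Type*} [Nonempty U] [Fintype V] [Fintype W]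
    (T : SimpleGraph W) (hT : T.IsTree) (k : ℕ) (hk : 1 ≤ k)
    (hTk : T.edgeSet.ncard = k) (G : SimpleGraph V) :
    (∀ (H : SimpleGraph U) (c : Sym2 U → ℕ), IsProperEdgeColoring H c →
      (∀ u : U, 2 * k ≤ (H.neighborSet u).ncard) → HasRainbowCopy H c T) ∧
    rainbowMinDegree G T < 2 * k := by
  have hcard : Fintype.card W - 1 = k := by
    have := hT.ncard_edgeSet_add_one
    omega
  refine ⟨fun H c hc hdeg => ?_, ?_⟩
  · obtain ⟨f, hf⟩ := hT.exists_isRainbow_copy hc (hcard ▸ hdeg)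
    exact hf.hasRainbowCopy
  · simpa only [hcard] using hT.rainbowMinDegree_lt G (by omega)

/-- Let `T` be a tree with `k ≥ 1` edges. Every properly edge-colored
graph with minimum degree at least `2k` contains a rainbow copy of `T`;
consequently `δ*(G,T) < 2k` for every graph `G`. -/
theorem stmt2 {U V W : Type*} [Fintype U] [Nonempty U] [Fintype V] [Fintype W]
    (T : SimpleGraph W) (hT : T.IsTree) (k : ℕ) (hk : 1 ≤ k)
    (hTk : T.edgeSet.ncard = k) (G : SimpleGraph V) :
    (∀ (H : SimpleGraph U) (c : Sym2 U → ℕ), IsProperEdgeColoring H c →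
      (∀ u : U, 2 * k ≤ (H.neighborSet u).ncard) → HasRainbowCopy H c T) ∧
    rainbowMinDegree G T < 2 * k :=
  stmt2_general T hT k hk hTk G
end

section
/- Let p ≥ 2 be an integer, let k = 2^p - 1, and let n be a positive integer divisible by k+1. Then δ*(K_n, P_k) ≥ k; that is, K_n contains a spanning subgraph H with minimum degree k together with a proper edge coloring of H containing no rainbow path with k edges. -/
open SimpleGraph

open Finset

/-!
Split `Fin n` into consecutive blocks of `2^p` vertices, make each block a clique and identify
it with `(ℤ/2)^p` through the binary digits of the residue mod `2^p`; color the edge `uv` by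
`u + v`, i.e. by the xor of the residues. The coloring is proper and the graph is
`(2^p - 1)`-regular. A path with `2^p - 1` edges stays inside one block, so it visits all of
`(ℤ/2)^p`; if it were rainbow its steps would be all the nonzero vectors, whose sum vanishes
for `p ≥ 2`, and the path would end where it started.
-/

theorem Fin.sum_succ_sub_castSucc {A : Type*} [AddCommGroup A] :
    ∀ {k : ℕ} (x : Fin (k + 1) → A),
      ∑ i : Fin k, (x i.succ - x i.castSucc) = x (last k) - x 0
  | 0, _ => by simp
  | k + 1, x => by
    simp only [Fin.sum_univ_castSucc, Fin.succ_castSucc]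
    rw [Fin.sum_succ_sub_castSucc (fun i => x i.castSucc), Fin.succ_last, Fin.castSucc_zero]
    abel

theorem Fintype.sum_univ_pi_eq_zero {ι R : Type*} [Fintype ι] [DecidableEq ι] [AddCommGroup R]
    [Fintype R] (hι : 1 < Fintype.card ι) : ∑ y : ι → R, y = 0 := by
  ext j
  obtain ⟨c, hc⟩ : ∃ c, Fintype.card {i // i ≠ j} = c + 1 :=
    ⟨Fintype.card ι - 2, by rw [Fintype.card_subtype_compl, Fintype.card_subtype_eq]; omega⟩
  rw [Finset.sum_apply, ← (Equiv.funSplitAt j R).symm.sum_comp, Fintype.sum_prod_type]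
  simp only [Equiv.funSplitAt, Equiv.piSplitAt, Equiv.coe_fn_symm_mk, dif_pos, sum_const,
    card_univ, Fintype.card_fun, hc, pow_succ, mul_nsmul, card_nsmul_eq_zero, nsmul_zero,
    Pi.zero_apply]

theorem sum_eq_zero_of_injective_of_ne_zero {A : Type*} [AddCommGroup A] [Fintype A]
    (hA : ∑ a : A, a = 0) {k : ℕ} (hk : k + 1 = Fintype.card A) {d : Fin k → A}
    (hinj : Function.Injective d) (hne : ∀ i, d i ≠ 0) : ∑ i, d i = 0 := by
  classical
  have himage : univ.image d = univ.erase 0 := by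
    apply eq_of_subset_of_card_le
    · intro a ha
      obtain ⟨i, -, rfl⟩ := mem_image.1 ha
      exact mem_erase.2 ⟨hne i, mem_univ _⟩
    · rw [card_image_of_injective _ hinj, card_erase_of_mem (mem_univ _), card_univ, card_univ,
        Fintype.card_fin]
      omega
  calc ∑ i, d i = ∑ a ∈ univ.image d, a :=
        (sum_image (f := fun a : A => a) fun i _ j _ h => hinj h).symm
    _ = 0 := by rw [himage, sum_erase univ (f := fun a : A => a) rfl, hA]

theorem apply_last_eq_apply_zero_of_injective_sub {A : Type*} [AddCommGroup A] [Fintype A]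
    (hA : ∑ a : A, a = 0) {k : ℕ} (hk : k + 1 = Fintype.card A) (x : Fin (k + 1) → A)
    (hinj : Function.Injective fun i : Fin k => x i.succ - x i.castSucc)
    (hne : ∀ i : Fin k, x i.succ ≠ x i.castSucc) : x (Fin.last k) = x 0 := by
  have hsteps := sum_eq_zero_of_injective_of_ne_zero hA hk hinj fun i => sub_ne_zero.2 (hne i)
  rwa [Fin.sum_succ_sub_castSucc, sub_eq_zero] at hsteps

/-- The last `p` binary digits of `x`, in `(ℤ/2)^p` modelled as `Fin p → Bool`
(where `+` is xor). -/
def lowBits (p x : ℕ) : Fin p → Bool := fun j => x.testBit j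

theorem lowBits_xor (p x y : ℕ) : lowBits p (x ^^^ y) = lowBits p x + lowBits p y :=
  funext fun j => Nat.testBit_xor x y j

theorem lowBits_injOn (p : ℕ) : Set.InjOn (lowBits p) (Set.Iio (2 ^ p)) := by
  intro x hx y hy h
  apply Nat.eq_of_testBit_eq
  intro j
  by_cases hj : j < p
  · exact congrFun h ⟨j, hj⟩
  · have hpj : 2 ^ p ≤ 2 ^ j := Nat.pow_le_pow_right two_pos (not_lt.1 hj)
    rw [Nat.testBit_eq_false_of_lt (lt_of_lt_of_le hx hpj),
      Nat.testBit_eq_false_of_lt (lt_of_lt_of_le hy hpj)]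

theorem isProperEdgeColoring_of_adj {V : Type*} {H : SimpleGraph V} {c : Sym2 V → ℕ}
    (h : ∀ ⦃v x y⦄, H.Adj v x → H.Adj v y → x ≠ y → c s(v, x) ≠ c s(v, y)) :
    IsProperEdgeColoring H c := by
  rintro e₁ he₁ e₂ he₂ hne ⟨v, hv₁, hv₂⟩
  obtain ⟨x, rfl⟩ := Sym2.mem_iff_exists.1 hv₁
  obtain ⟨y, rfl⟩ := Sym2.mem_iff_exists.1 hv₂
  exact h he₁ he₂ fun hxy => hne (hxy ▸ rfl)

theorem le_rainbowMinDegree {V W : Type*} [Fintype V] {G : SimpleGraph V} {F : SimpleGraph W}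
    (H : G.Subgraph) (hH : RainbowFree H.spanningCoe F) :
    subMinDegree H ≤ rainbowMinDegree G F := by
  refine le_csSup (Set.Finite.bddAbove ((Set.finite_range (subMinDegree (G := G))).subset ?_))
    ⟨H, hH, rfl⟩
  rintro _ ⟨H', -, rfl⟩
  exact ⟨H', rfl⟩

theorem sInf_ncard_neighborSet_of_forall {V : Type*} [Nonempty V] {H : SimpleGraph V} {d : ℕ}
    (h : ∀ v, (H.neighborSet v).ncard = d) :
    sInf {d | ∃ v : V, d = (H.neighborSet v).ncard} = d := by
  have hset : {d | ∃ v : V, d = (H.neighborSet v).ncard} = {d} := by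
    ext e
    simp only [h, Set.mem_ofPred_eq, exists_const, Set.mem_singleton_iff]
  rw [hset, csInf_singleton]

theorem pathGraph_adj_castSucc_succ {k : ℕ} (i : Fin k) :
    (pathGraph (k + 1)).Adj i.castSucc i.succ :=
  pathGraph_adj.2 (Or.inl (by simp))

def blockGraph (n m : ℕ) : SimpleGraph (Fin n) where
  Adj x y := x ≠ y ∧ x.val / m = y.val / m
  symm := ⟨fun _ _ h => ⟨h.1.symm, h.2.symm⟩⟩
  loopless := ⟨fun _ h => h.1 rfl⟩

def xorColoring (n m : ℕ) : Sym2 (Fin n) → ℕ :=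
  Sym2.lift ⟨fun x y => x.val % m ^^^ y.val % m, fun _ _ => Nat.xor_comm _ _⟩

section blockGraph

variable {n m : ℕ}

theorem isProperEdgeColoring_xorColoring :
    IsProperEdgeColoring (blockGraph n m) (xorColoring n m) := by
  refine isProperEdgeColoring_of_adj fun v x y hx hy hxy hc => hxy ?_
  exact Fin.ext (Nat.ext_div_modEq (hx.2.symm.trans hy.2) (Nat.xor_right_inj.1 hc))

theorem ncard_neighborSet_blockGraph (hdvd : m ∣ n) (v : Fin n) :
    ((blockGraph n m).neighborSet v).ncard = m - 1 := by
  have hm : 0 < m := Nat.pos_of_dvd_of_pos hdvd v.pos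
  have hv := (Nat.div_eq_iff hm).1 (rfl : v.val / m = v.val / m)
  have hblock : v.val / m * m + m ≤ n := by
    obtain ⟨t, rfl⟩ := hdvd
    have : v.val / m < t := (Nat.div_lt_iff_lt_mul hm).2 (by linarith [v.isLt])
    nlinarith
  have himage : Fin.val '' (blockGraph n m).neighborSet v =
      Set.Ico (v.val / m * m) (v.val / m * m + m) \ {v.val} := by
    ext w
    simp only [Set.mem_image, mem_neighborSet, blockGraph, Set.mem_sdiff, Set.mem_Ico,
      Set.mem_singleton_iff]
    constructor
    · rintro ⟨w, ⟨hne, hdiv⟩, rfl⟩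
      have := (Nat.div_eq_iff hm).1 hdiv.symm
      exact ⟨by omega, fun h => hne (Fin.ext h.symm)⟩
    · rintro ⟨hw, hne⟩
      refine ⟨⟨w, by omega⟩, ⟨fun h => hne (congrArg Fin.val h).symm, ?_⟩, rfl⟩
      show v.val / m = w / m
      exact ((Nat.div_eq_iff hm).2 (by omega)).symm
  rw [← Set.ncard_image_of_injective _ Fin.val_injective, himage,
    Set.ncard_sdiff_singleton_of_mem ?_, Set.ncard_Ico_nat, Nat.add_sub_cancel_left]
  exact Set.mem_Ico.2 (by omega)

theorem div_eq_of_adj_blockGraph {k : ℕ} {f : Fin (k + 1) → Fin n}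
    (hf : ∀ i : Fin k, (blockGraph n m).Adj (f i.castSucc) (f i.succ)) (i : Fin (k + 1)) :
    (f i).val / m = (f 0).val / m := by
  induction i using Fin.induction with
  | zero => rfl
  | succ i ih => exact (hf i).2.symm.trans ih

theorem not_hasRainbowCopy_blockGraph_pathGraph {p k : ℕ} (hp : 2 ≤ p) (hk : k + 1 = 2 ^ p) :
    ¬ HasRainbowCopy (blockGraph n (2 ^ p)) (xorColoring n (2 ^ p)) (pathGraph (k + 1)) := by
  rintro ⟨f, hadj, hrainbow⟩
  have hm : 0 < 2 ^ p := Nat.two_pow_pos p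
  let x : Fin (k + 1) → Fin p → Bool := fun i => lowBits p ((f i).val % 2 ^ p)
  have hblock := div_eq_of_adj_blockGraph fun i => hadj (pathGraph_adj_castSucc_succ i)
  have hx : Function.Injective x := fun i j hij =>
    f.injective <| Fin.ext <| Nat.ext_div_modEq ((hblock i).trans (hblock j).symm)
      (lowBits_injOn p (Nat.mod_lt _ hm) (Nat.mod_lt _ hm) hij)
  have hstep (i : Fin k) : x i.succ - x i.castSucc =
      lowBits p (xorColoring n (2 ^ p) s(f i.castSucc, f i.succ)) := by
    rw [xorColoring, Sym2.lift_mk, lowBits_xor, add_comm]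
    exact funext fun j => BooleanRing.sub_eq_add (α := Bool) _ _
  have hcolor_lt (i : Fin k) : xorColoring n (2 ^ p) s(f i.castSucc, f i.succ) < 2 ^ p :=
    Nat.xor_lt_two_pow (Nat.mod_lt _ hm) (Nat.mod_lt _ hm)
  have hsteps : Function.Injective fun i : Fin k => x i.succ - x i.castSucc := by
    intro i j hij
    simp only [hstep] at hij
    by_contra hne
    refine hrainbow (pathGraph_adj_castSucc_succ i) (pathGraph_adj_castSucc_succ j) ?_
      (lowBits_injOn p (hcolor_lt i) (hcolor_lt j) hij)
    rw [Ne, Sym2.eq_iff]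
    rintro (⟨h, -⟩ | ⟨h₁, h₂⟩)
    · exact hne (Fin.castSucc_injective _ h)
    · simp only [Fin.ext_iff, Fin.val_castSucc, Fin.val_succ] at h₁ h₂
      omega
  have hsum : ∑ y : Fin p → Bool, y = 0 :=
    Fintype.sum_univ_pi_eq_zero (by rw [Fintype.card_fin]; omega)
  have hclosed := apply_last_eq_apply_zero_of_injective_sub hsum (by simpa using hk) x hsteps
    fun i h => Fin.castSucc_lt_succ.ne' (hx h)
  have hk0 : k = 0 := congrArg Fin.val (hx hclosed)
  have := Nat.pow_le_pow_right two_pos hp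
  omega

end blockGraph

/-- For `p ≥ 2`, `k = 2^p - 1` and `n > 0` divisible by `k+1`, we have
`δ*(K_n, P_k) ≥ k`; that is, `K_n` has a spanning subgraph with minimum degree `k`
admitting a proper edge coloring with no rainbow path with `k` edges. -/
theorem stmt4 (p n k : ℕ) (hp : 2 ≤ p) (hk : k = 2 ^ p - 1) (hn : 0 < n)
    (hdvd : (k + 1) ∣ n) :
    k ≤ rainbowMinDegree (⊤ : SimpleGraph (Fin n)) (SimpleGraph.pathGraph (k + 1)) ∧
    ∃ H : SimpleGraph (Fin n),
      sInf {d | ∃ v : Fin n, d = (H.neighborSet v).ncard} = k ∧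
      RainbowFree H (SimpleGraph.pathGraph (k + 1)) := by
  have hkp : k + 1 = 2 ^ p := by have := Nat.one_le_two_pow (n := p); omega
  have hfree : RainbowFree (blockGraph n (2 ^ p)) (pathGraph (k + 1)) :=
    ⟨xorColoring n (2 ^ p), isProperEdgeColoring_xorColoring,
      not_hasRainbowCopy_blockGraph_pathGraph hp hkp⟩
  have : Nonempty (Fin n) := ⟨⟨0, hn⟩⟩
  have hmin : sInf {d | ∃ v : Fin n, d = ((blockGraph n (2 ^ p)).neighborSet v).ncard} = k :=
    sInf_ncard_neighborSet_of_forall fun v => by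
      rw [ncard_neighborSet_blockGraph (hkp ▸ hdvd)]
      omega
  refine ⟨?_, blockGraph n (2 ^ p), hmin, hfree⟩
  calc k = subMinDegree (toSubgraph (blockGraph n (2 ^ p)) le_top) := by
        rw [← hmin]
        simp only [subMinDegree, toSubgraph, Set.mem_univ, true_and]
        rfl
    _ ≤ _ := le_rainbowMinDegree _ hfree
end
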